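/- Let V be a leafless rooted directed tree and μ=(μ_v)_{v∈V} a weight of nonzero scalars. Suppose the unweighted backward shift B is an operator on ℓ^1(V,μ). Then B is chaotic on ℓ^1(V,μ) if and only if for every v∈V there exists a branch (v,v_1,v_2,…) starting from v such that ∑_{n=1}^∞ |μ_{v_n}| < ∞. -/

import Mathlib

/-!
Sufficiency: finitely supported vectors are dense. Every vertex reaches the root, so `T ^ n`
eventually kills each `e_v`; along a branch `b` from `v` we have `T ^ n e_{b n} = e_v` with
`‖e_{b n}‖ = |μ_{b n}| → 0`. The hypercyclicity criterion and Birkhoff's theorem give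
hypercyclicity, and once `T ^ N e_v = 0` the vector `∑ₖ e_{b (k N)}` is an `N`-periodic point
close to `e_v`.

Necessity: a periodic point `x` with `x v ≠ 0` and period `N` yields the superharmonic function
`Z = ∑_{j < N} B^j |x|` (`Z ≤ B Z`) in `ℓ^1(V, μ)` with `Z v > 0`. Let `W u` be the
`Z |μ|`-mass of the subtree at `u`. By averaging, every `u` with `Z u ≠ 0` has a child `c` with
`W c / Z c + |μ u| ≤ W u / Z u`; always stepping to such a child gives a branch along which the
weights sum to at most `W v / Z v`.
-/

open scoped ENNReal NNReal Topology Classical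
open Filter

namespace PaperTree

/-! ### Directed trees -/

variable {V : Type*}

/-- Iterated parent map of a directed tree given by a parent function. -/
def parIter (par : V → Option V) : ℕ → V → Option V
  | 0, v => some v
  | n + 1, v => (par v).bind (parIter par n)

/-- `par` is the parent function of a (countable, connected, acyclic) directed tree on `V`,
in which every vertex has at most one parent and at most one vertex (the root) has none. -/
structure IsDirectedTree (par : V → Option V) : Prop where
  countable : Countable V
  acyclic : ∀ (v : V) (n : ℕ), 0 < n → parIter par n v ≠ some v
  connected : ∀ u v : V, ∃ (m n : ℕ) (w : V), parIter par m u = some w ∧ parIter par n v = some w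
  root_unique : ∀ u v : V, par u = none → par v = none → u = v

/-- The set of children of `v`. -/
def children (par : V → Option V) (v : V) : Set V := {u : V | par u = some v}

/-- The set of descendants of `v` (including `v`); the rooted subtree `V(v)`. -/
def descendants (par : V → Option V) (v : V) : Set V := {u : V | ∃ n : ℕ, parIter par n u = some v}

def IsLeafV (par : V → Option V) (v : V) : Prop := children par v = ∅

def Leafless (par : V → Option V) : Prop := ∀ v : V, children par v ≠ ∅

def IsRoot (par : V → Option V) (v : V) : Prop := par v = none

def Rooted (par : V → Option V) : Prop := ∃ v : V, IsRoot par v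

def Unrooted (par : V → Option V) : Prop := ∀ v : V, par v ≠ none

/-- The tree has a free left end: some vertex all of whose (proper) ancestors
have exactly one child. -/
def HasFreeLeftEnd (par : V → Option V) : Prop :=
  ∃ v : V, ∀ n : ℕ, 1 ≤ n → ∀ w : V, parIter par n v = some w → ∃! u : V, u ∈ children par w

/-- The tree has finite length (all branches have uniformly bounded length). -/
def FiniteLength (par : V → Option V) : Prop := ∃ m : ℕ, ∀ u : V, parIter par (m + 1) u = none

/-- Product of the weights along the upward path of length `n` ending at `u`;
for `u ∈ Chi^n(v)` this is `λ(v → u)`, and `pathProd par lam n v = λ(par^n(v) → v)`. -/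
def pathProd {𝕜 : Type*} [Monoid 𝕜] (par : V → Option V) (lam : V → 𝕜) : ℕ → V → 𝕜
  | 0, _ => 1
  | n + 1, u => lam u * ((par u).elim 1 (pathProd par lam n))

/-- A (finite or infinite, maximal) branch starting at `v`, encoded with `Option`. -/
def IsOptBranch (par : V → Option V) (v : V) (b : ℕ → Option V) : Prop :=
  b 0 = some v ∧
  (∀ (k : ℕ) (w : V), b k = some w →
      (children par w = ∅ ∧ b (k + 1) = none) ∨ ∃ u ∈ children par w, b (k + 1) = some u) ∧
  ∀ k : ℕ, b k = none → b (k + 1) = none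

/-- An infinite branch starting at `v` (adequate for leafless trees). -/
def IsBranch (par : V → Option V) (v : V) (b : ℕ → V) : Prop :=
  b 0 = v ∧ ∀ k : ℕ, b (k + 1) ∈ children par (b k)

/-- The `[0,∞]`-valued absolute weight associated with a scalar weight. -/
noncomputable def nw {𝕜 : Type*} [RCLike 𝕜] (μ : V → 𝕜) : V → ℝ≥0∞ := fun v => (‖μ v‖₊ : ℝ≥0∞)

/-! ### Linear dynamics -/

section Dynamics

variable {𝕜 : Type*} [RCLike 𝕜] {X : Type*} [AddCommGroup X] [Module 𝕜 X] [TopologicalSpace X]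

/-- An operator is hypercyclic if some vector has dense orbit. -/
def Hypercyclic (T : X →L[𝕜] X) : Prop :=
  ∃ x : X, Dense (Set.range fun n : ℕ => (T ^ n) x)

/-- A periodic point of the operator `T`. -/
def IsPeriodicPoint (T : X →L[𝕜] X) (x : X) : Prop :=
  ∃ N : ℕ, 1 ≤ N ∧ (T ^ N) x = x

/-- An operator is chaotic if it is hypercyclic and has a dense set of periodic points. -/
def ChaoticOp (T : X →L[𝕜] X) : Prop :=
  Hypercyclic T ∧ Dense {x : X | IsPeriodicPoint T x}

/-- Topological mixing. -/
def MixingOp (T : X →L[𝕜] X) : Prop :=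
  ∀ U₁ U₂ : Set X, IsOpen U₁ → IsOpen U₂ → U₁.Nonempty → U₂.Nonempty →
    ∃ m : ℕ, ∀ n : ℕ, m ≤ n → ((⇑(T ^ n)) '' U₁ ∩ U₂).Nonempty

/-- Weak mixing: `T ⊕ T` is hypercyclic on `X × X`. -/
def WeaklyMixingOp (T : X →L[𝕜] X) : Prop :=
  Hypercyclic (T.prodMap T)

variable {V : Type*}

/-- `T` is (a representation via the coefficient embedding `ι` of) the weighted backward
shift `B_λ` as an operator on `X`: for every `x ∈ X` and every vertex `v` the defining
series converges unconditionally to the `v`-th coefficient of `T x`. -/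
def IsShiftRep (par : V → Option V) (lam : V → 𝕜) (ι : X →ₗ[𝕜] V → 𝕜) (T : X →L[𝕜] X) : Prop :=
  ∀ (x : X) (v : V), HasSum (fun u : ↥(children par v) => lam u.1 * ι x u.1) (ι (T x) v)

end Dynamics

/-! ### Concrete sequence spaces `ℓ^p(V, μ)` and `c₀(V, μ)`, up to isometry -/

section SpaceRep

variable {𝕜 : Type*} [RCLike 𝕜] {V : Type*} {X : Type*} [NormedAddCommGroup X] [NormedSpace 𝕜 X]

/-- `X` is (an isometric copy of) the weighted space `ℓ^p(V, μ)`, the identification being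
given by the coefficient embedding `ι`. -/
def IsLpSpaceRep (ι : X →ₗ[𝕜] V → 𝕜) (μ : V → 𝕜) (p : ℝ) : Prop :=
  Function.Injective ι ∧
  (∀ f : V → 𝕜, (∑' v : V, (‖f v * μ v‖₊ : ℝ≥0∞) ^ p) < ⊤ ↔ f ∈ Set.range ι) ∧
  ∀ x : X, (‖x‖₊ : ℝ≥0∞) = (∑' v : V, (‖ι x v * μ v‖₊ : ℝ≥0∞) ^ p) ^ (1 / p)

/-- `X` is (an isometric copy of) the weighted space `c₀(V, μ)`. -/
def IsC0SpaceRep (ι : X →ₗ[𝕜] V → 𝕜) (μ : V → 𝕜) : Prop :=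
  Function.Injective ι ∧
  (∀ f : V → 𝕜, (∀ ε : ℝ, 0 < ε → {v : V | ε ≤ ‖f v * μ v‖}.Finite) ↔ f ∈ Set.range ι) ∧
  ∀ x : X, (‖x‖₊ : ℝ≥0∞) = ⨆ v : V, (‖ι x v * μ v‖₊ : ℝ≥0∞)

end SpaceRep


open Function Set

section Tree

variable {V : Type*} {par : V → Option V}

lemma parIter_succ' (n : ℕ) (u : V) : parIter par (n + 1) u = (parIter par n u).bind par := by
  induction n generalizing u with
  | zero => exact Option.bind_fun_some _
  | succ n ih =>
    change (par u).bind (parIter par (n + 1)) = ((par u).bind (parIter par n)).bind par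
    simp only [ih, Option.bind_assoc]

lemma parIter_add (m n : ℕ) (u : V) :
    parIter par (m + n) u = (parIter par m u).bind (parIter par n) := by
  induction n with
  | zero => cases parIter par m u <;> rfl
  | succ n ih => simp only [← add_assoc, parIter_succ', ih, Option.bind_assoc]

lemma IsDirectedTree.eq_of_parIter_eq_some (hTree : IsDirectedTree par) {w a : V} {i j : ℕ}
    (hi : parIter par i w = some a) (hj : parIter par j w = some a) : i = j := by
  wlog hij : i ≤ j generalizing i j
  · exact (this hj hi (by omega)).symm
  obtain ⟨k, rfl⟩ := Nat.exists_eq_add_of_le hij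
  rw [parIter_add, hi] at hj
  by_contra hk
  exact hTree.acyclic a k (by omega) hj

end Tree

section ChildSum

variable {V : Type*} {par : V → Option V}

/-- The unweighted backward shift acting on `[0, ∞]`-valued functions. -/
noncomputable def childSum (par : V → Option V) (g : V → ℝ≥0∞) (u : V) : ℝ≥0∞ :=
  ∑' c : children par u, g c

lemma childSum_mono {g h : V → ℝ≥0∞} (hgh : g ≤ h) : childSum par g ≤ childSum par h :=
  fun _ => ENNReal.tsum_le_tsum fun c => hgh c

lemma childSum_tsum {ι : Type*} (g : ι → V → ℝ≥0∞) (u : V) :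
    childSum par (fun w => ∑' i, g i w) u = ∑' i, childSum par (g i) u :=
  ENNReal.tsum_comm

lemma childSum_finset_sum {ι : Type*} (s : Finset ι) (g : ι → V → ℝ≥0∞) (u : V) :
    childSum par (fun w => ∑ i ∈ s, g i w) u = ∑ i ∈ s, childSum par (g i) u :=
  Summable.tsum_finsetSum fun _ _ => ENNReal.summable

lemma childSum_iterate_apply (g : V → ℝ≥0∞) (j : ℕ) (u : V) :
    (childSum par)^[j] g u = ∑' w, if parIter par j w = some u then g w else 0 := by
  induction j generalizing u with
  | zero => exact (tsum_ite_eq u g).symm.trans (tsum_congr fun w => by simp [parIter, eq_comm])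
  | succ j ih =>
    rw [iterate_succ_apply', childSum, tsum_congr fun c : children par u => ih c, ENNReal.tsum_comm]
    refine tsum_congr fun w => ?_
    rw [parIter_succ']
    rcases hw : parIter par j w with _ | a
    · simp
    · by_cases ha : par a = some u
      · rw [tsum_eq_single (⟨a, ha⟩ : children par u) fun c hc => if_neg fun h =>
          hc (Subtype.ext (Option.some.inj h).symm)]
        simp [ha]
      · have hne : ∀ c : children par u, a ≠ c := fun c h => ha (h ▸ c.2)
        simp [ha, hne]

lemma IsDirectedTree.tsum_childSum_iterate_le (hTree : IsDirectedTree par) (g : V → ℝ≥0∞)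
    (u : V) : ∑' j, (childSum par)^[j] g u ≤ ∑' w, g w := by
  simp_rw [childSum_iterate_apply]
  rw [ENNReal.tsum_comm]
  refine ENNReal.tsum_le_tsum fun w => ?_
  by_cases h : ∃ j, parIter par j w = some u
  · obtain ⟨j, hj⟩ := h
    rw [tsum_eq_single j fun i hi => if_neg fun h => hi (hTree.eq_of_parIter_eq_some h hj)]
    rw [if_pos hj]
  · simp [not_exists.mp h]

end ChildSum

section Descent

variable {V : Type*} {par : V → Option V} {Z W m : V → ℝ≥0∞}

lemma tsum_le_of_add_le_succ {a R : ℕ → ℝ≥0∞} (h : ∀ n, a n + R (n + 1) ≤ R n) :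
    ∑' n, a n ≤ R 0 := by
  have key : ∀ K, ∑ n ∈ Finset.range K, a n + R K ≤ R 0 := by
    intro K
    induction K with
    | zero => simp
    | succ K ih =>
      calc ∑ n ∈ Finset.range (K + 1), a n + R (K + 1)
          = ∑ n ∈ Finset.range K, a n + (a K + R (K + 1)) := by
            rw [Finset.sum_range_succ, add_assoc]
        _ ≤ ∑ n ∈ Finset.range K, a n + R K := by gcongr; exact h K
        _ ≤ R 0 := ih
  exact ENNReal.tsum_le_of_sum_range_le fun K => le_self_add.trans (key K)

/-- The `Z`-weighted average of `W c / Z c` over the children `c` of `u` is at most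
`W u / Z u - m u`. -/
lemma exists_child_div_add_le (hZ : ∀ w, Z w ≠ ⊤) {u : V} (hZu : Z u ≠ 0)
    (hsuper : Z u ≤ childSum par Z u) (hBZ : childSum par Z u ≠ ⊤) (hWu : W u ≠ ⊤)
    (hW : Z u * m u + childSum par W u ≤ W u) :
    ∃ c ∈ children par u, Z c ≠ 0 ∧ W c / Z c + m u ≤ W u / Z u := by
  suffices ∃ c : children par u, Z c ≠ 0 ∧ W c * Z u + Z u * m u * Z c ≤ W u * Z c by
    obtain ⟨c, hc, hle⟩ := this
    refine ⟨c, c.2, hc, ?_⟩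
    rw [ENNReal.le_div_iff_mul_le (Or.inl hZu) (Or.inl (hZ u)),
      ← ENNReal.mul_le_mul_iff_left hc (hZ c)]
    calc (W c / Z c + m u) * Z u * Z c = W c / Z c * Z c * Z u + Z u * m u * Z c := by ring
      _ = W c * Z u + Z u * m u * Z c := by rw [ENNReal.div_mul_cancel hc (hZ c)]
      _ ≤ W u * Z c := hle
  by_contra! hlt
  obtain ⟨c₀, hc₀⟩ : ∃ c : children par u, Z c ≠ 0 := by
    by_contra! h
    exact hZu (le_antisymm (hsuper.trans (ENNReal.tsum_eq_zero.2 h).le) bot_le)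
  have hsum_lt :
      W u * childSum par Z u < childSum par W u * Z u + Z u * m u * childSum par Z u := by
    rw [childSum, childSum, ← ENNReal.tsum_mul_left, ← ENNReal.tsum_mul_right,
      ← ENNReal.tsum_mul_left, ← ENNReal.tsum_add]
    refine ENNReal.tsum_lt_tsum (by rw [ENNReal.tsum_mul_left]; exact ENNReal.mul_ne_top hWu hBZ)
      (fun c => ?_) (hlt c₀ hc₀)
    by_cases hc : Z c = 0
    · simp [hc]
    · exact (hlt c hc).le
  refine hsum_lt.not_ge ?_
  calc childSum par W u * Z u + Z u * m u * childSum par Z u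
      ≤ childSum par W u * childSum par Z u + Z u * m u * childSum par Z u := by gcongr
    _ = (Z u * m u + childSum par W u) * childSum par Z u := by ring
    _ ≤ W u * childSum par Z u := by gcongr

lemma exists_branch_tsum_le (hZ : ∀ u, Z u ≠ ⊤) (hsuper : ∀ u, Z u ≤ childSum par Z u)
    (hBZ : ∀ u, childSum par Z u ≠ ⊤) (hW : ∀ u, W u ≠ ⊤)
    (hWsuper : ∀ u, Z u * m u + childSum par W u ≤ W u) {v : V} (hv : Z v ≠ 0) :
    ∃ b : ℕ → V, IsBranch par v b ∧ ∑' n, m (b n) ≤ W v / Z v := by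
  choose next hnext using fun u : {u // Z u ≠ 0} =>
    exists_child_div_add_le hZ u.2 (hsuper u) (hBZ u) (hW u) (hWsuper u)
  let b' : ℕ → {u // Z u ≠ 0} := fun n => (fun u => ⟨next u, (hnext u).2.1⟩)^[n] ⟨v, hv⟩
  have hb' : ∀ n, (b' (n + 1) : V) = next (b' n) := fun n => by
    simp only [b', iterate_succ_apply']
  refine ⟨fun n => b' n, ⟨rfl, fun n => by simpa only [hb'] using (hnext (b' n)).1⟩, ?_⟩
  refine tsum_le_of_add_le_succ (R := fun n => W (b' n) / Z (b' n)) fun n => ?_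
  rw [add_comm, hb']
  exact (hnext _).2.2

lemma IsDirectedTree.exists_branch_tsum_ne_top (hTree : IsDirectedTree par)
    (hZ : ∀ u, Z u ≠ ⊤) (hsuper : ∀ u, Z u ≤ childSum par Z u)
    (hBZ : ∀ u, childSum par Z u ≠ ⊤) (hfin : ∑' u, Z u * m u ≠ ⊤) {v : V} (hv : Z v ≠ 0) :
    ∃ b : ℕ → V, IsBranch par v b ∧ ∑' n, m (b n) ≠ ⊤ := by
  set W : V → ℝ≥0∞ := fun u => ∑' j, (childSum par)^[j] (Z * m) u
  have hW : ∀ u, W u ≠ ⊤ := fun u =>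
    ne_top_of_le_ne_top hfin (hTree.tsum_childSum_iterate_le _ u)
  have hWsuper : ∀ u, Z u * m u + childSum par W u ≤ W u := fun u => le_of_eq <| by
    simp only [W]
    rw [childSum_tsum, tsum_eq_zero_add' (f := fun j => (childSum par)^[j] (Z * m) u)
      ENNReal.summable]
    simp only [iterate_succ_apply', iterate_zero_apply, Pi.mul_apply]
  obtain ⟨b, hb, hsum⟩ := exists_branch_tsum_le hZ hsuper hBZ hW hWsuper hv
  exact ⟨b, hb, ne_top_of_le_ne_top (ENNReal.div_lt_top (hW v) hv).ne hsum⟩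

end Descent

section WeightedLOne

variable {𝕜 : Type*} [RCLike 𝕜] {V : Type*} {X : Type*} [NormedAddCommGroup X]
  [NormedSpace 𝕜 X] {ι : X →ₗ[𝕜] V → 𝕜} {μ : V → 𝕜}

noncomputable def unitVec (ι : X →ₗ[𝕜] V → 𝕜) (u : V) : X := invFun ι (Pi.single u 1)

namespace IsLpSpaceRep

lemma enorm_eq (hX : IsLpSpaceRep ι μ 1) (x : X) : ‖x‖ₑ = ∑' w, ‖ι x w‖ₑ * ‖μ w‖ₑ := by
  simpa [enorm_eq_nnnorm] using hX.2.2 x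

lemma mem_range_iff (hX : IsLpSpaceRep ι μ 1) {f : V → 𝕜} :
    f ∈ range ι ↔ ∑' w, ‖f w‖ₑ * ‖μ w‖ₑ ≠ ⊤ := by
  simpa [enorm_eq_nnnorm, lt_top_iff_ne_top] using (hX.2.1 f).symm

lemma hasSum_norm (hX : IsLpSpaceRep ι μ 1) (x : X) :
    HasSum (fun w => ‖ι x w‖ * ‖μ w‖) ‖x‖ := by
  have h : HasSum (fun w => ((‖ι x w‖₊ * ‖μ w‖₊ : ℝ≥0) : ℝ≥0∞)) ‖x‖₊ := by
    have := hX.enorm_eq x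
    simp only [enorm_eq_nnnorm] at this
    rw [this]
    push_cast
    exact ENNReal.summable.hasSum
  simpa using NNReal.hasSum_coe.2 (ENNReal.hasSum_coe.1 h)

lemma norm_apply_mul_le (hX : IsLpSpaceRep ι μ 1) (x : X) (v : V) :
    ‖ι x v‖ * ‖μ v‖ ≤ ‖x‖ :=
  le_hasSum (hX.hasSum_norm x) v fun _ _ => by positivity

lemma apply_unitVec (hX : IsLpSpaceRep ι μ 1) (u : V) : ι (unitVec ι u) = Pi.single u 1 := by
  refine invFun_eq (hX.mem_range_iff.2 ?_)
  rw [tsum_eq_single u fun w hw => by simp [hw]]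
  simp

lemma norm_unitVec (hX : IsLpSpaceRep ι μ 1) (u : V) : ‖unitVec ι u‖ = ‖μ u‖ := by
  refine (hX.hasSum_norm _).unique ?_
  convert hasSum_ite_eq u ‖μ u‖ using 1
  ext w
  by_cases hw : w = u <;> simp [hX.apply_unitVec, hw]

lemma weight_ne_zero (hX : IsLpSpaceRep ι μ 1) (u : V) : μ u ≠ 0 := by
  intro h
  have h0 : unitVec ι u = 0 := norm_eq_zero.1 (by rw [hX.norm_unitVec, h, norm_zero])
  simpa [h0] using congrFun (hX.apply_unitVec u) u

lemma continuous_apply (hX : IsLpSpaceRep ι μ 1) (v : V) : Continuous fun x => ι x v := by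
  have hμ : 0 < ‖μ v‖ := norm_pos_iff.2 (hX.weight_ne_zero v)
  refine AddMonoidHomClass.continuous_of_bound (LinearMap.proj v ∘ₗ ι) ‖μ v‖⁻¹ fun x => ?_
  rw [LinearMap.comp_apply, LinearMap.proj_apply, inv_mul_eq_div, le_div_iff₀ hμ]
  exact hX.norm_apply_mul_le x v

lemma hasSum_unitVec (hX : IsLpSpaceRep ι μ 1) (x : X) :
    HasSum (fun w => ι x w • unitVec ι w) x := by
  suffices Tendsto (fun F : Finset V => ‖∑ w ∈ F, ι x w • unitVec ι w - x‖) atTop (𝓝 0) from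
    tendsto_iff_norm_sub_tendsto_zero.2 this
  convert tendsto_tsum_compl_atTop_zero fun w => ‖ι x w‖ * ‖μ w‖ using 2 with F
  have hcoord : ι (∑ w ∈ F, ι x w • unitVec ι w - x) = fun w => -(if w ∈ F then 0 else ι x w) := by
    ext w
    by_cases hw : w ∈ F <;> simp [hX.apply_unitVec, Pi.single_apply, hw]
  rw [← (hX.hasSum_norm _).tsum_eq, hcoord]
  refine (tsum_congr fun w => ?_).trans (tsum_subtype {w | w ∉ F} fun w => ‖ι x w‖ * ‖μ w‖).symm
  by_cases hw : w ∈ F <;> simp [hw]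

lemma dense_span_unitVec (hX : IsLpSpaceRep ι μ 1) :
    Dense (Submodule.span 𝕜 (range (unitVec ι)) : Set X) := fun x =>
  mem_closure_of_tendsto (hX.hasSum_unitVec x) <| Eventually.of_forall fun _ =>
    Submodule.sum_mem _ fun w _ => Submodule.smul_mem _ _ (Submodule.subset_span ⟨w, rfl⟩)

lemma dense_of_unitVec_mem (hX : IsLpSpaceRep ι μ 1) {S : Submodule 𝕜 X}
    (hS : ∀ u, unitVec ι u ∈ S) : Dense (S : Set X) :=
  hX.dense_span_unitVec.mono (Submodule.span_le.2 (range_subset_iff.2 hS))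

lemma separableSpace [Countable V] (hX : IsLpSpaceRep ι μ 1) :
    TopologicalSpace.SeparableSpace X := by
  rw [← TopologicalSpace.isSeparable_univ_iff, ← hX.dense_span_unitVec.closure_eq]
  exact (countable_range _).isSeparable.span.closure

end IsLpSpaceRep

lemma IsLpSpaceRep.apply_elim_unitVec (hX : IsLpSpaceRep ι μ 1) (o : Option V) (w : V) :
    ι (o.elim 0 (unitVec ι)) w = if o = some w then 1 else 0 := by
  cases o <;> simp [hX.apply_unitVec, Pi.single_apply, eq_comm]

variable {par : V → Option V} {T : X →L[𝕜] X}

lemma IsShiftRep.hasSum_apply (hT : IsShiftRep par (fun _ => (1 : 𝕜)) ι T) (x : X) (v : V) :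
    HasSum (fun c : children par v => ι x c) (ι (T x) v) := by
  simpa using hT x v

lemma IsShiftRep.apply_unitVec (hT : IsShiftRep par (fun _ => (1 : 𝕜)) ι T)
    (hX : IsLpSpaceRep ι μ 1) (u : V) : T (unitVec ι u) = (par u).elim 0 (unitVec ι) := by
  refine hX.1 (funext fun w => ?_)
  rw [hX.apply_elim_unitVec]
  refine (hT.hasSum_apply _ w).unique ?_
  simp only [hX.apply_unitVec]
  split_ifs with h
  · convert hasSum_ite_eq (⟨u, h⟩ : children par w) (1 : 𝕜) using 1
    ext c
    simp [Pi.single_apply, Subtype.ext_iff, eq_comm]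
  · convert hasSum_zero with c
    exact Pi.single_eq_of_ne (fun hc : (c : V) = u => h (hc ▸ c.2)) _

lemma IsShiftRep.pow_apply_unitVec (hT : IsShiftRep par (fun _ => (1 : 𝕜)) ι T)
    (hX : IsLpSpaceRep ι μ 1) (n : ℕ) (u : V) :
    (T ^ n) (unitVec ι u) = (parIter par n u).elim 0 (unitVec ι) := by
  induction n generalizing u with
  | zero => rfl
  | succ n ih =>
    rw [pow_succ, mul_apply_eq_comp, hT.apply_unitVec hX]
    rcases hp : par u with _ | p
    · simp [parIter, hp]
    · simp [parIter, hp, ih]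

lemma IsShiftRep.apply_unitVec_branch (hT : IsShiftRep par (fun _ => (1 : 𝕜)) ι T)
    (hX : IsLpSpaceRep ι μ 1) {v : V} {b : ℕ → V} (hb : IsBranch par v b) (k : ℕ) :
    T (unitVec ι (b (k + 1))) = unitVec ι (b k) := by
  rw [hT.apply_unitVec hX, hb.2 k]
  rfl

lemma IsDirectedTree.eventually_parIter_eq_none (hTree : IsDirectedTree par) {root : V}
    (hroot : IsRoot par root) (u : V) : ∀ᶠ n in atTop, parIter par n u = none := by
  obtain ⟨m, n, w, hm, hn⟩ := hTree.connected u root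
  obtain rfl : w = root := by
    cases n with
    | zero => exact (Option.some.inj hn).symm
    | succ n => simp [parIter, show par root = none from hroot] at hn
  refine eventually_atTop.2 ⟨m + 1, fun k hk => ?_⟩
  obtain ⟨j, rfl⟩ := Nat.exists_eq_add_of_le hk
  rw [parIter_add, parIter_succ', hm]
  simp [show par w = none from hroot]

lemma IsShiftRep.eventually_pow_apply_unitVec (hT : IsShiftRep par (fun _ => (1 : 𝕜)) ι T)
    (hX : IsLpSpaceRep ι μ 1) (hTree : IsDirectedTree par) {root : V} (hroot : IsRoot par root)
    (u : V) : ∀ᶠ n in atTop, (T ^ n) (unitVec ι u) = 0 :=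
  (hTree.eventually_parIter_eq_none hroot u).mono fun n hn => by
    rw [hT.pow_apply_unitVec hX, hn]
    rfl

end WeightedLOne

section LinearDynamics

variable {𝕜 : Type*} [RCLike 𝕜] {X : Type*} [AddCommGroup X] [Module 𝕜 X] [TopologicalSpace X]

lemma pow_mul_apply_eq_self {T : X →L[𝕜] X} {x : X} {N : ℕ} (hx : (T ^ N) x = x)
    (k : ℕ) : (T ^ (N * k)) x = x := by
  rw [pow_mul, FunLike.coe_pow_eq_iterate]
  exact iterate_fixed hx k

/-- A common period of `x` and `y` is the product of their periods. -/
def periodicSubmodule (T : X →L[𝕜] X) : Submodule 𝕜 X where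
  carrier := {x | IsPeriodicPoint T x}
  zero_mem' := ⟨1, le_rfl, map_zero _⟩
  add_mem' := by
    rintro x y ⟨M, hM, hx⟩ ⟨N, hN, hy⟩
    refine ⟨M * N, Nat.one_le_iff_ne_zero.2 (by positivity), ?_⟩
    rw [map_add, pow_mul_apply_eq_self hx, mul_comm, pow_mul_apply_eq_self hy]
  smul_mem' := by
    rintro c x ⟨N, hN, hx⟩
    exact ⟨N, hN, by rw [map_smul, hx]⟩

/-- Birkhoff's transitivity theorem: by Baire, the points whose orbit meets every basic open
set form a dense `G_δ`. -/
theorem MixingOp.hypercyclic [BaireSpace X] [SecondCountableTopology X] {T : X →L[𝕜] X}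
    (hT : MixingOp T) : Hypercyclic T := by
  obtain ⟨B, hBc, hBne, hB⟩ := TopologicalSpace.exists_countable_basis X
  have hopen : ∀ U ∈ B, IsOpen (⋃ n : ℕ, ⇑(T ^ n) ⁻¹' U) := fun U hU =>
    isOpen_iUnion fun n => (hB.isOpen hU).preimage (T ^ n).continuous
  have hdense : ∀ U ∈ B, Dense (⋃ n : ℕ, ⇑(T ^ n) ⁻¹' U) := by
    intro U hU
    refine dense_iff_inter_open.2 fun W hW hWne => ?_
    obtain ⟨m, hm⟩ := hT W U hW (hB.isOpen hU) hWne (nonempty_iff_ne_empty.2 fun h => hBne (h ▸ hU))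
    obtain ⟨_, ⟨x, hxW, rfl⟩, hxU⟩ := hm m le_rfl
    exact ⟨x, hxW, mem_iUnion.2 ⟨m, hxU⟩⟩
  obtain ⟨x, hx⟩ := (dense_biInter_of_isOpen hopen hBc hdense).nonempty
  refine ⟨x, hB.dense_iff.2 fun U hU _ => ?_⟩
  obtain ⟨n, hn⟩ := mem_iUnion.1 (mem_iInter₂.1 hx U hU)
  exact ⟨_, hn, n, rfl⟩

variable [ContinuousAdd X] [ContinuousConstSMul 𝕜 X]

def orbitNullSubmodule (T : X →L[𝕜] X) : Submodule 𝕜 X where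
  carrier := {x | Tendsto (fun n => (T ^ n) x) atTop (𝓝 0)}
  zero_mem' := by simpa only [mem_ofPred_eq, map_zero] using tendsto_const_nhds
  add_mem' := by
    intro x y hx hy
    simpa only [mem_ofPred_eq, map_add, add_zero] using hx.add hy
  smul_mem' := by
    intro c x hx
    simpa only [mem_ofPred_eq, map_smul, smul_zero] using hx.const_smul c

def smallPreimageSubmodule (T : X →L[𝕜] X) : Submodule 𝕜 X where
  carrier := {y | ∃ u : ℕ → X, Tendsto u atTop (𝓝 0) ∧ ∀ n, (T ^ n) (u n) = y}
  zero_mem' := ⟨0, tendsto_const_nhds, fun _ => map_zero _⟩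
  add_mem' := by
    rintro x y ⟨u, hu, hux⟩ ⟨w, hw, hwy⟩
    exact ⟨fun n => u n + w n, by simpa only [add_zero] using hu.add hw,
      fun n => by rw [map_add, hux, hwy]⟩
  smul_mem' := by
    rintro c y ⟨u, hu, huy⟩
    exact ⟨fun n => c • u n, by simpa only [smul_zero] using hu.const_smul c,
      fun n => by rw [map_smul, huy]⟩

/-- The hypercyclicity criterion, in the form giving topological mixing. -/
theorem mixingOp_of_dense {T : X →L[𝕜] X} (h₁ : Dense (orbitNullSubmodule T : Set X))
    (h₂ : Dense (smallPreimageSubmodule T : Set X)) : MixingOp T := by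
  intro U₁ U₂ hU₁ hU₂ hne₁ hne₂
  obtain ⟨x, hxU, hx⟩ := h₁.inter_open_nonempty U₁ hU₁ hne₁
  obtain ⟨y, hyU, u, hu, huy⟩ := h₂.inter_open_nonempty U₂ hU₂ hne₂
  have hU₁' : ∀ᶠ n in atTop, x + u n ∈ U₁ := by
    refine (tendsto_const_nhds.add hu).eventually (hU₁.mem_nhds ?_)
    simpa using hxU
  have hU₂' : ∀ᶠ n in atTop, (T ^ n) (x + u n) ∈ U₂ := by
    simp_rw [map_add, huy]
    refine (Tendsto.add_const y hx).eventually (hU₂.mem_nhds ?_)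
    simpa using hyU
  obtain ⟨m, hm⟩ := eventually_atTop.1 (hU₁'.and hU₂')
  exact ⟨m, fun n hn => ⟨_, mem_image_of_mem _ (hm n hn).1, (hm n hn).2⟩⟩

end LinearDynamics

section BackwardOrbit

variable {𝕜 : Type*} [RCLike 𝕜] {X : Type*} [NormedAddCommGroup X] [NormedSpace 𝕜 X]
  {T : X →L[𝕜] X} {y : ℕ → X}

lemma pow_apply_add_of_backward (hy : ∀ k, T (y (k + 1)) = y k) (m n : ℕ) :
    (T ^ n) (y (m + n)) = y m := by
  induction n with
  | zero => rfl
  | succ n ih => rw [pow_succ, mul_apply_eq_comp, ← add_assoc, hy, ih]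

lemma mem_smallPreimageSubmodule_of_backward (hy : ∀ k, T (y (k + 1)) = y k)
    (hy₀ : Tendsto y atTop (𝓝 0)) : y 0 ∈ smallPreimageSubmodule T :=
  ⟨y, hy₀, fun n => by simpa using pow_apply_add_of_backward hy 0 n⟩

/-- If `(T ^ N) (y 0) = 0`, then `∑ₖ y (k N)` is `N`-periodic. -/
lemma exists_isPeriodicPoint_norm_sub_le [CompleteSpace X] (hy : ∀ k, T (y (k + 1)) = y k)
    (hsum : Summable fun k => ‖y k‖) {N : ℕ} (hN : 1 ≤ N) (hyN : (T ^ N) (y 0) = 0) :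
    ∃ p, IsPeriodicPoint T p ∧ ‖p - y 0‖ ≤ ∑' j, ‖y (j + N)‖ := by
  have hinj : Injective fun k : ℕ => k * N := fun a b h => Nat.eq_of_mul_eq_mul_right hN h
  have hnormN : Summable fun k => ‖y (k * N)‖ := hsum.comp_injective hinj
  have hsumN : Summable fun k => y (k * N) := hnormN.of_norm
  refine ⟨∑' k, y (k * N), ⟨N, hN, ?_⟩, ?_⟩
  · rw [(T ^ N).map_tsum hsumN, ((T ^ N).summable hsumN).tsum_eq_zero_add, zero_mul, hyN,
      zero_add]
    refine tsum_congr fun k => ?_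
    rw [add_mul, one_mul, pow_apply_add_of_backward hy]
  · rw [hsumN.tsum_eq_zero_add, zero_mul, add_sub_cancel_left]
    have hnorm1 : Summable fun k => ‖y ((k + 1) * N)‖ := (summable_nat_add_iff 1).2 hnormN
    refine (norm_tsum_le_tsum_norm hnorm1).trans ?_
    refine (tsum_comp_le_tsum_of_inj ((summable_nat_add_iff N).2 hsum)
      (fun _ => norm_nonneg _) hinj).trans_eq' (tsum_congr fun k => ?_)
    simp [add_mul]

lemma mem_closure_periodic_of_backward [CompleteSpace X] (hy : ∀ k, T (y (k + 1)) = y k)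
    (hsum : Summable fun k => ‖y k‖) (hyN : ∀ᶠ N in atTop, (T ^ N) (y 0) = 0) :
    y 0 ∈ closure {x | IsPeriodicPoint T x} := by
  refine Metric.mem_closure_iff.2 fun ε hε => ?_
  have htail := ((tendsto_sum_nat_add fun j => ‖y j‖).eventually (gt_mem_nhds hε))
  obtain ⟨N, hN, hyN, htail⟩ := ((eventually_ge_atTop 1).and (hyN.and htail)).exists
  obtain ⟨p, hp, hpy⟩ := exists_isPeriodicPoint_norm_sub_le hy hsum hN hyN
  exact ⟨p, hp, by rw [dist_eq_norm']; exact hpy.trans_lt htail⟩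

end BackwardOrbit

section Necessity

open scoped ComplexOrder

variable {𝕜 : Type*} [RCLike 𝕜] {V : Type*} {X : Type*} [NormedAddCommGroup X]
  [NormedSpace 𝕜 X] {ι : X →ₗ[𝕜] V → 𝕜} {μ : V → 𝕜} {par : V → Option V} {T : X →L[𝕜] X}

lemma IsShiftRep.enorm_apply_le (hT : IsShiftRep par (fun _ => (1 : 𝕜)) ι T) (x : X) (u : V) :
    ‖ι (T x) u‖ₑ ≤ childSum par (fun w => ‖ι x w‖ₑ) u :=
  (hT.hasSum_apply x u).enorm_le_of_bounded ENNReal.summable.hasSum fun _ => le_rfl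

lemma IsShiftRep.enorm_pow_apply_le (hT : IsShiftRep par (fun _ => (1 : 𝕜)) ι T) (x : X)
    (n : ℕ) : (fun u => ‖ι ((T ^ n) x) u‖ₑ) ≤ (childSum par)^[n] fun w => ‖ι x w‖ₑ := by
  induction n with
  | zero => exact le_rfl
  | succ n ih =>
    intro u
    rw [pow_succ', mul_apply_eq_comp, iterate_succ_apply']
    exact (hT.enorm_apply_le _ u).trans (childSum_mono ih u)

lemma re_eq_norm_of_nonneg {a : 𝕜} (ha : 0 ≤ a) : RCLike.re a = ‖a‖ :=
  (congrArg RCLike.re (RCLike.norm_of_nonneg' ha)).symm.trans (RCLike.ofReal_re _)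

lemma IsShiftRep.apply_nonneg (hT : IsShiftRep par (fun _ => (1 : 𝕜)) ι T) {z : X}
    (hz : ∀ w, 0 ≤ ι z w) (u : V) : 0 ≤ ι (T z) u :=
  HasSum.nonneg (fun c : children par u => hz c) (hT.hasSum_apply z u)

lemma IsShiftRep.enorm_apply_of_nonneg (hT : IsShiftRep par (fun _ => (1 : 𝕜)) ι T) {z : X}
    (hz : ∀ w, 0 ≤ ι z w) (u : V) : ‖ι (T z) u‖ₑ = childSum par (fun w => ‖ι z w‖ₑ) u := by
  have hnorm : HasSum (fun c : children par u => ‖ι z c‖) ‖ι (T z) u‖ := by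
    simpa only [RCLike.reCLM_apply, re_eq_norm_of_nonneg (hz _),
      re_eq_norm_of_nonneg (hT.apply_nonneg hz u)] using (hT.hasSum_apply z u).mapL RCLike.reCLM
  rw [childSum, ← ofReal_norm, hnorm.tsum_eq.symm,
    ENNReal.ofReal_tsum_of_nonneg (fun _ => norm_nonneg _) hnorm.summable]
  simp only [ofReal_norm]

lemma enorm_ofReal_norm (a : 𝕜) : ‖((‖a‖ : ℝ) : 𝕜)‖ₑ = ‖a‖ₑ := by
  rw [← ofReal_norm, ← ofReal_norm, RCLike.norm_ofReal, abs_norm]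

lemma IsShiftRep.exists_enorm_pow_apply_eq (hT : IsShiftRep par (fun _ => (1 : 𝕜)) ι T)
    (hX : IsLpSpaceRep ι μ 1) (x : X) :
    ∃ z : X, ∀ n, (fun u => ‖ι ((T ^ n) z) u‖ₑ) = (childSum par)^[n] fun w => ‖ι x w‖ₑ := by
  obtain ⟨z, hz⟩ : (fun w => ((‖ι x w‖ : ℝ) : 𝕜)) ∈ range ι :=
    hX.mem_range_iff.2 (by simpa only [enorm_ofReal_norm, ← hX.enorm_eq] using enorm_ne_top)
  have key : ∀ n, (∀ u, 0 ≤ ι ((T ^ n) z) u) ∧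
      (fun u => ‖ι ((T ^ n) z) u‖ₑ) = (childSum par)^[n] fun w => ‖ι x w‖ₑ := by
    intro n
    induction n with
    | zero => exact ⟨fun u => by simp [hz], funext fun u => by simp [hz, enorm_ofReal_norm]⟩
    | succ n ih =>
      simp only [pow_succ', mul_apply_eq_comp, iterate_succ_apply', ← ih.2]
      exact ⟨hT.apply_nonneg ih.1, funext (hT.enorm_apply_of_nonneg ih.1)⟩
  exact ⟨z, fun n => (key n).2⟩

/-- For a periodic point `x` of period `N`, the function `Z = ∑_{j < N} B^j |x|` is superharmonic,
since `Z + B^N |x| = |x| + B Z` and `|x| = |T^N x| ≤ B^N |x|`; it lies in `ℓ^1(V, μ)` because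
`B^j |x| = |T^j z|` with `z = |x| ∈ X`. -/
lemma IsShiftRep.exists_superharmonic (hT : IsShiftRep par (fun _ => (1 : 𝕜)) ι T)
    (hX : IsLpSpaceRep ι μ 1) {x : X} {N : ℕ} (hN : 1 ≤ N) (hxN : (T ^ N) x = x) :
    ∃ Z : V → ℝ≥0∞, (∀ u, Z u ≠ ⊤) ∧ (∀ u, Z u ≤ childSum par Z u) ∧
      (∀ u, childSum par Z u ≠ ⊤) ∧ ∑' u, Z u * ‖μ u‖ₑ ≠ ⊤ ∧ ∀ u, ‖ι x u‖ₑ ≤ Z u := by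
  obtain ⟨z, hz⟩ := hT.exists_enorm_pow_apply_eq hX x
  set σ : ℕ → V → ℝ≥0∞ := fun n => (childSum par)^[n] fun w => ‖ι x w‖ₑ
  have hσ : ∀ n u, σ n u = ‖ι ((T ^ n) z) u‖ₑ := fun n u => (congrFun (hz n) u).symm
  have hσ_ne_top : ∀ n u, σ n u ≠ ⊤ := fun n u => hσ n u ▸ enorm_ne_top
  have hBσ : ∀ n u, childSum par (σ n) u = σ (n + 1) u := fun n u => by
    simp only [σ, iterate_succ_apply']
  refine ⟨fun u => ∑ j ∈ Finset.range N, σ j u, fun u => ?_, fun u => ?_, fun u => ?_, ?_,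
    fun u => ?_⟩
  · exact ENNReal.sum_ne_top.2 fun j _ => hσ_ne_top j u
  · have hσN : σ 0 u ≤ σ N u := by
      change ‖ι x u‖ₑ ≤ _
      simpa only [hxN] using hT.enorm_pow_apply_le x N u
    have hsplit := (Finset.sum_range_succ (σ · u) N).symm.trans (Finset.sum_range_succ' (σ · u) N)
    rw [childSum_finset_sum]
    simp only [hBσ]
    refine ENNReal.le_of_add_le_add_right (hσ_ne_top N u) ?_
    rw [hsplit]
    gcongr
  · rw [childSum_finset_sum]
    exact ENNReal.sum_ne_top.2 fun j _ => hBσ j u ▸ hσ_ne_top (j + 1) u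
  · simp_rw [Finset.sum_mul]
    rw [Summable.tsum_finsetSum fun _ _ => ENNReal.summable]
    refine ENNReal.sum_ne_top.2 fun j _ => ?_
    simpa only [hσ, ← hX.enorm_eq] using enorm_ne_top
  · exact Finset.single_le_sum (f := (σ · u)) (fun _ _ => zero_le) (Finset.mem_range.2 hN)

theorem exists_branch_summable_of_dense_periodic (hTree : IsDirectedTree par)
    (hX : IsLpSpaceRep ι μ 1) (hT : IsShiftRep par (fun _ => (1 : 𝕜)) ι T)
    (hper : Dense {x | IsPeriodicPoint T x}) (v : V) :
    ∃ b : ℕ → V, IsBranch par v b ∧ Summable fun n => ‖μ (b n)‖ := by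
  obtain ⟨x, hxv, N, hN, hxN⟩ := hper.inter_open_nonempty {x | ι x v ≠ 0}
    (isOpen_ne_fun (hX.continuous_apply v) continuous_const)
    ⟨unitVec ι v, by simp [hX.apply_unitVec]⟩
  obtain ⟨Z, hZ, hsuper, hBZ, hfin, hxZ⟩ := hT.exists_superharmonic hX hN hxN
  have hZv : Z v ≠ 0 := (pos_of_gt ((enorm_pos.2 hxv).trans_le (hxZ v))).ne'
  obtain ⟨b, hb, hsum⟩ := hTree.exists_branch_tsum_ne_top hZ hsuper hBZ hfin hZv
  exact ⟨b, hb, tsum_enorm_ne_top_iff_summable_norm.1 hsum⟩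

end Necessity

section Sufficiency

variable {𝕜 : Type*} [RCLike 𝕜] {V : Type*} {X : Type*} [NormedAddCommGroup X]
  [NormedSpace 𝕜 X] [CompleteSpace X] {ι : X →ₗ[𝕜] V → 𝕜} {μ : V → 𝕜} {par : V → Option V}
  {T : X →L[𝕜] X}

theorem chaoticOp_of_forall_branch_summable (hTree : IsDirectedTree par) {root : V}
    (hroot : IsRoot par root) (hX : IsLpSpaceRep ι μ 1)
    (hT : IsShiftRep par (fun _ => (1 : 𝕜)) ι T)
    (hbranch : ∀ v, ∃ b : ℕ → V, IsBranch par v b ∧ Summable fun n => ‖μ (b n)‖) :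
    ChaoticOp T := by
  choose b hb hsum using hbranch
  have : Countable V := hTree.countable
  have : TopologicalSpace.SeparableSpace X := hX.separableSpace
  have hback : ∀ v k, T (unitVec ι (b v (k + 1))) = unitVec ι (b v k) := fun v =>
    hT.apply_unitVec_branch hX (hb v)
  have hnorm : ∀ v, Summable fun k => ‖unitVec ι (b v k)‖ := fun v => by
    simpa only [hX.norm_unitVec] using hsum v
  have hb₀ : ∀ v, unitVec ι (b v 0) = unitVec ι v := fun v => by rw [(hb v).1]
  have hnil : ∀ v, ∀ᶠ n in atTop, (T ^ n) (unitVec ι (b v 0)) = 0 := fun v => by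
    simpa only [hb₀] using hT.eventually_pow_apply_unitVec hX hTree hroot v
  refine ⟨MixingOp.hypercyclic (mixingOp_of_dense ?_ ?_), ?_⟩
  · refine hX.dense_of_unitVec_mem fun v => ?_
    exact tendsto_const_nhds.congr' <| (hnil v).mono fun n hn => by simpa only [hb₀] using hn.symm
  · refine hX.dense_of_unitVec_mem fun v => hb₀ v ▸ ?_
    exact mem_smallPreimageSubmodule_of_backward (hback v)
      (tendsto_zero_iff_norm_tendsto_zero.2 (hnorm v).tendsto_atTop_zero)
  · change Dense (periodicSubmodule T : Set X)
    rw [← dense_closure, ← Submodule.topologicalClosure_coe]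
    refine hX.dense_of_unitVec_mem fun v => hb₀ v ▸ ?_
    exact mem_closure_periodic_of_backward (hback v) (hnorm v) (hnil v)

end Sufficiency

lemma tsum_nw_succ_lt_top_iff {𝕜 : Type*} [RCLike 𝕜] {V : Type*} {μ : V → 𝕜} {b : ℕ → V} :
    ∑' n, nw μ (b (n + 1)) < ⊤ ↔ Summable fun n => ‖μ (b n)‖ := by
  simp only [lt_top_iff_ne_top, nw, ← enorm_eq_nnnorm]
  exact tsum_enorm_ne_top_iff_summable_norm.trans (summable_nat_add_iff (f := fun n => ‖μ (b n)‖) 1)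

theorem statement11_general
    {𝕜 : Type*} [RCLike 𝕜] {V : Type*} (par : V → Option V) (hTree : IsDirectedTree par)
    (root : V) (hroot : IsRoot par root)
    (μ : V → 𝕜)
    {X : Type*} [NormedAddCommGroup X] [NormedSpace 𝕜 X] [CompleteSpace X]
    (ι : X →ₗ[𝕜] V → 𝕜) (hX : IsLpSpaceRep ι μ 1)
    (T : X →L[𝕜] X) (hT : IsShiftRep par (fun _ : V => (1 : 𝕜)) ι T) :
    ChaoticOp T ↔
      ∀ v : V, ∃ b : ℕ → V, IsBranch par v b ∧
        (∑' n : ℕ, nw μ (b (n + 1))) < ⊤ := by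
  simp only [tsum_nw_succ_lt_top_iff]
  exact ⟨fun h => exists_branch_summable_of_dense_periodic hTree hX hT h.2,
    chaoticOp_of_forall_branch_summable hTree hroot hX hT⟩

/-- Theorem 7.3 / `t-char1mu`: on a leafless rooted tree, the unweighted
backward shift, as an operator on `ℓ^1(V,μ)`, is chaotic if and only if every vertex admits
a branch along which the weights are summable. -/
theorem statement11
    {𝕜 : Type*} [RCLike 𝕜] {V : Type*} (par : V → Option V) (hTree : IsDirectedTree par)
    (hLeafless : Leafless par) (root : V) (hroot : IsRoot par root)
    (μ : V → 𝕜) (hμ : ∀ v : V, μ v ≠ 0)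
    {X : Type*} [NormedAddCommGroup X] [NormedSpace 𝕜 X] [CompleteSpace X]
    (ι : X →ₗ[𝕜] V → 𝕜) (hX : IsLpSpaceRep ι μ 1)
    (T : X →L[𝕜] X) (hT : IsShiftRep par (fun _ : V => (1 : 𝕜)) ι T) :
    ChaoticOp T ↔
      ∀ v : V, ∃ b : ℕ → V, IsBranch par v b ∧
        (∑' n : ℕ, nw μ (b (n + 1))) < ⊤ :=
  statement11_general par hTree root hroot μ ι hX T hT
end PaperTree
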